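/- Let Z_1,...,Z_n (n ≥ 2) be independent, symmetric, mean-zero random variables. Let μ̂ = (1/n)∑ Z_i, σ̂² = (1/(n−1))∑(Z_i − μ̂)², and T = μ̂/(σ̂/√n). Then for all t > 0, Pr[ T² ≥ t² ] ≤ 2·exp( −(1/2)·t²/(1 + t²/(n−1)) ). -/

import Mathlib

/-!
Given the moduli |Z_i|, symmetry and independence make the signs of the Z_i independent fair
coins: the joint law of (Z_i) is invariant under every sign flip, so it suffices to bound, for
each fixed vector x, the proportion of sign patterns ε with (∑ ε_i x_i)² ≥ s ∑ x_i². Hoeffding's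
argument (cosh u ≤ exp (u²/2)) bounds it by 2 exp (-s/2). On {σ̂² > 0}, the identity
(n - 1) σ̂² = ∑ Z_i² - (∑ Z_i)²/n shows that T² ≥ t² forces (∑ Z_i)² ≥ s ∑ Z_i² with
s = t²/(1 + t²/(n - 1)).
-/

open MeasureTheory ProbabilityTheory Finset Real
open scoped ENNReal

section

variable {ι : Type*}

def signFlip (ε : ι → Bool) (x : ι → ℝ) (i : ι) : ℝ := if ε i then x i else -x i

lemma signFlip_neg (ε : ι → Bool) (x : ι → ℝ) : signFlip ε (-x) = -signFlip ε x := by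
  funext i
  by_cases h : ε i <;> simp [signFlip, h]

lemma sq_signFlip (ε : ι → Bool) (x : ι → ℝ) (i : ι) : signFlip ε x i ^ 2 = x i ^ 2 := by
  by_cases h : ε i <;> simp [signFlip, h]

lemma measurable_signFlip (ε : ι → Bool) : Measurable (signFlip ε : (ι → ℝ) → ι → ℝ) :=
  measurable_pi_lambda _ fun i => by
    by_cases h : ε i <;> simp only [signFlip, h, if_true, Bool.false_eq_true, if_false] <;> fun_prop

lemma measure_le_of_card_mem_le {α κ : Type*} [MeasurableSpace α] [Fintype κ] [Nonempty κ]
    {ν : Measure α} {f : κ → α → α} (hf : ∀ k, Measurable (f k)) (hν : ∀ k, ν.map (f k) = ν)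
    {A : Set α} [DecidablePred (· ∈ A)] (hA : MeasurableSet A) {c : ℝ≥0∞}
    (hc : ∀ x, (#{k | f k x ∈ A} : ℝ≥0∞) ≤ Fintype.card κ * c) :
    ν A ≤ c * ν Set.univ := by
  have hsum : Fintype.card κ * ν A ≤ Fintype.card κ * (c * ν Set.univ) :=
    calc Fintype.card κ * ν A = ∑ k, ν (f k ⁻¹' A) := by
          simp [← Measure.map_apply (hf _) hA, hν]
      _ = ∑ k, ∫⁻ x, (f k ⁻¹' A).indicator 1 x ∂ν := by
          simp only [lintegral_indicator_one (hf _ hA)]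
      _ = ∫⁻ x, ∑ k, (f k ⁻¹' A).indicator 1 x ∂ν :=
          (lintegral_finsetSum _ fun k _ => measurable_const.indicator (hf k hA)).symm
      _ = ∫⁻ x, (#{k | f k x ∈ A} : ℝ≥0∞) ∂ν := by
          classical
          simp [Set.indicator_apply]
      _ ≤ ∫⁻ _, Fintype.card κ * c ∂ν := lintegral_mono hc
      _ = Fintype.card κ * (c * ν Set.univ) := by rw [lintegral_const, mul_assoc]
  exact (ENNReal.mul_le_mul_iff_right (by simp) (by simp)).mp hsum

lemma card_le_sum_exp {κ : Type*} [Fintype κ] (f : κ → ℝ) (b : ℝ) {θ : ℝ} (hθ : 0 ≤ θ) :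
    (#{k | b ≤ f k} : ℝ) ≤ ∑ k, exp (θ * (f k - b)) := by
  rw [← sum_boole]
  refine sum_le_sum fun k _ => ?_
  split_ifs with h
  · exact one_le_exp (mul_nonneg hθ (sub_nonneg.mpr h))
  · positivity

variable [Fintype ι]

lemma map_signFlip_map_eq {Ω : Type*} [MeasurableSpace Ω] {μ : Measure Ω}
    [IsProbabilityMeasure μ] {Z : ι → Ω → ℝ} (hmeas : ∀ i, Measurable (Z i))
    (hindep : iIndepFun Z μ)
    (hsym : ∀ i, μ.map (Z i) = μ.map (fun ω => -Z i ω)) (ε : ι → Bool) :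
    (μ.map fun ω i => Z i ω).map (signFlip ε) = μ.map fun ω i => Z i ω := by
  rw [(iIndepFun_iff_map_fun_eq_pi_map fun i => (hmeas i).aemeasurable).1 hindep]
  have hflip : ∀ i, (μ.map (Z i)).map (fun y => if ε i then y else -y) = μ.map (Z i) := by
    intro i
    by_cases h : ε i
    · simp [h]
    · simp only [h, Bool.false_eq_true, if_false]
      rw [Measure.map_map measurable_neg (hmeas i), hsym i]
      rfl
  calc (Measure.pi fun i => μ.map (Z i)).map (signFlip ε)
      = Measure.pi fun i => (μ.map (Z i)).map (fun y => if ε i then y else -y) :=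
        Measure.pi_map_pi (f := fun i y => if ε i then y else -y) fun i => by
          by_cases h : ε i <;> simp only [h, if_true, Bool.false_eq_true, if_false] <;> fun_prop
    _ = Measure.pi fun i => μ.map (Z i) := by simp only [hflip]

lemma sum_sq_sub_mean (x : ι → ℝ) :
    ∑ i, (x i - 1 / Fintype.card ι * ∑ j, x j) ^ 2
      = ∑ i, x i ^ 2 - (∑ i, x i) ^ 2 / Fintype.card ι := by
  rcases isEmpty_or_nonempty ι with hι | hι
  · simp
  have hN : (Fintype.card ι : ℝ) ≠ 0 := by positivity
  simp only [sub_sq, sum_add_distrib, sum_sub_distrib, ← sum_mul, ← mul_sum, sum_const,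
    card_univ, nsmul_eq_mul]
  field_simp
  ring

lemma sq_sum_ge_of_sq_le_studentT (x : ι → ℝ) (hN : 2 ≤ Fintype.card ι) {m v t : ℝ}
    (hm : m = 1 / Fintype.card ι * ∑ i, x i)
    (hv : v = 1 / ((Fintype.card ι : ℝ) - 1) * ∑ i, (x i - m) ^ 2) (hv0 : 0 < v)
    (hT : t ^ 2 ≤ (m / (√v / √(Fintype.card ι))) ^ 2) :
    0 < ∑ i, x i ^ 2
      ∧ t ^ 2 / (1 + t ^ 2 / ((Fintype.card ι : ℝ) - 1)) * ∑ i, x i ^ 2 ≤ (∑ i, x i) ^ 2 := by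
  have hN2 : (2 : ℝ) ≤ Fintype.card ι := by exact_mod_cast hN
  have hvar : ((Fintype.card ι : ℝ) - 1) * v
      = ∑ i, x i ^ 2 - (∑ i, x i) ^ 2 / Fintype.card ι := by
    rw [hv, hm, sum_sq_sub_mean]
    field_simp [show (Fintype.card ι : ℝ) - 1 ≠ 0 by linarith]
  set N : ℝ := (Fintype.card ι : ℝ)
  set S := ∑ i, x i
  set Q := ∑ i, x i ^ 2
  have hN1 : 0 < N - 1 := by linarith
  have hN0 : 0 < N := by linarith
  have hQ : 0 < Q := by
    have : 0 < (N - 1) * v := mul_pos hN1 hv0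
    have : 0 ≤ S ^ 2 / N := by positivity
    linarith
  have hT' : t ^ 2 * (N * v) ≤ S ^ 2 := by
    rw [div_pow, div_pow, sq_sqrt hv0.le, sq_sqrt hN0.le, hm, le_div_iff₀ (by positivity)] at hT
    calc t ^ 2 * (N * v) = N ^ 2 * (t ^ 2 * (v / N)) := by field_simp
      _ ≤ N ^ 2 * (1 / N * S) ^ 2 := by gcongr
      _ = S ^ 2 := by field_simp
  refine ⟨hQ, ?_⟩
  rw [div_mul_eq_mul_div, div_le_iff₀ (by positivity)]
  have : t ^ 2 * (N * Q - S ^ 2) ≤ (N - 1) * S ^ 2 := by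
    calc t ^ 2 * (N * Q - S ^ 2) = (N - 1) * (t ^ 2 * (N * v)) := by
          rw [show N * Q - S ^ 2 = N * ((N - 1) * v) by rw [hvar]; field_simp]; ring
      _ ≤ (N - 1) * S ^ 2 := by gcongr
  -- this step discards the factor N / (N - 1) of the exact identity
  -- (∑ x)² / ∑ x² = (N / (N - 1)) T² / (1 + T² / (N - 1))
  refine le_of_mul_le_mul_left ?_ hN1
  calc (N - 1) * (t ^ 2 * Q) ≤ N * (t ^ 2 * Q) := by nlinarith [mul_nonneg (sq_nonneg t) hQ.le]
    _ ≤ (N - 1) * S ^ 2 + t ^ 2 * S ^ 2 := by linarith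
    _ = (N - 1) * (S ^ 2 * (1 + t ^ 2 / (N - 1))) := by field_simp

section

variable [DecidableEq ι]

lemma sum_exp_mul_sum_signFlip (θ : ℝ) (a : ι → ℝ) :
    ∑ ε : ι → Bool, exp (θ * ∑ i, signFlip ε a i) = ∏ i, 2 * cosh (θ * a i) := by
  calc ∑ ε : ι → Bool, exp (θ * ∑ i, signFlip ε a i)
      = ∑ ε : ι → Bool, ∏ i, exp (θ * if ε i then a i else -a i) := by
        simp only [mul_sum, exp_sum, signFlip]
    _ = ∏ i, ∑ e : Bool, exp (θ * if e then a i else -a i) :=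
        (Fintype.prod_sum fun i (e : Bool) => exp (θ * if e then a i else -a i)).symm
    _ = ∏ i, 2 * cosh (θ * a i) := by
        simp only [Fintype.sum_bool, if_true, Bool.false_eq_true, if_false, cosh_eq, mul_neg]
        ring_nf

lemma card_signFlip_sum_ge_le (a : ι → ℝ) (b : ℝ) (hQ : 0 < ∑ i, a i ^ 2) (hb : 0 ≤ b) :
    (#{ε | b ≤ ∑ i, signFlip ε a i} : ℝ)
      ≤ 2 ^ Fintype.card ι * exp (-b ^ 2 / (2 * ∑ i, a i ^ 2)) := by
  set Q := ∑ i, a i ^ 2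
  -- minimizes θ ^ 2 * Q / 2 - θ * b
  set θ := b / Q
  have hcosh : ∏ i, 2 * cosh (θ * a i) ≤ 2 ^ Fintype.card ι * exp (θ ^ 2 * Q / 2) := by
    calc ∏ i, 2 * cosh (θ * a i) ≤ ∏ i, 2 * exp ((θ * a i) ^ 2 / 2) :=
          prod_le_prod (fun i _ => by positivity)
            fun i _ => mul_le_mul_of_nonneg_left (cosh_le_exp_half_sq _) zero_le_two
      _ = 2 ^ Fintype.card ι * exp (θ ^ 2 * Q / 2) := by
          rw [prod_mul_distrib, prod_const, card_univ, ← exp_sum, mul_sum, sum_div]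
          simp only [mul_pow]
  calc (#{ε | b ≤ ∑ i, signFlip ε a i} : ℝ)
      ≤ ∑ ε : ι → Bool, exp (θ * ((∑ i, signFlip ε a i) - b)) :=
        card_le_sum_exp _ b (div_nonneg hb hQ.le)
    _ = exp (-(θ * b)) * ∏ i, 2 * cosh (θ * a i) := by
        rw [← sum_exp_mul_sum_signFlip, mul_sum]
        refine sum_congr rfl fun ε _ => ?_
        rw [← exp_add]
        ring_nf
    _ ≤ exp (-(θ * b)) * (2 ^ Fintype.card ι * exp (θ ^ 2 * Q / 2)) := by gcongr
    _ = 2 ^ Fintype.card ι * exp (-b ^ 2 / (2 * Q)) := by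
        rw [mul_left_comm, ← exp_add]
        congr 2
        simp only [θ]
        field_simp
        ring

lemma card_signFlip_sq_sum_ge_le (a : ι → ℝ) {s : ℝ} (hs : 0 ≤ s) (hQ : 0 < ∑ i, a i ^ 2) :
    (#{ε | s * ∑ i, a i ^ 2 ≤ (∑ i, signFlip ε a i) ^ 2} : ℝ)
      ≤ 2 ^ Fintype.card ι * (2 * exp (-s / 2)) := by
  set Q := ∑ i, a i ^ 2
  set b := √(s * Q)
  have hb : 0 ≤ b := sqrt_nonneg _
  have hexp : exp (-b ^ 2 / (2 * Q)) = exp (-s / 2) := by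
    rw [sq_sqrt (by positivity)]
    congr 1
    field_simp
  have hQneg : ∑ i, (-a) i ^ 2 = Q := by simp [Q]
  have hsplit : ({ε | s * Q ≤ (∑ i, signFlip ε a i) ^ 2} : Finset (ι → Bool))
      ⊆ ({ε | b ≤ ∑ i, signFlip ε a i} : Finset _)
        ∪ ({ε | b ≤ ∑ i, signFlip ε (-a) i} : Finset _) := by
    intro ε hε
    simp only [mem_filter, mem_univ, true_and, mem_union, signFlip_neg, Pi.neg_apply,
      sum_neg_distrib] at hε ⊢
    rw [← le_abs]
    calc b ≤ √((∑ i, signFlip ε a i) ^ 2) := sqrt_le_sqrt hε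
      _ = _ := sqrt_sq_eq_abs _
  calc (#{ε | s * Q ≤ (∑ i, signFlip ε a i) ^ 2} : ℝ)
      ≤ #{ε | b ≤ ∑ i, signFlip ε a i} + #{ε | b ≤ ∑ i, signFlip ε (-a) i} := by
        exact_mod_cast (card_le_card hsplit).trans (card_union_le _ _)
    _ ≤ 2 ^ Fintype.card ι * exp (-b ^ 2 / (2 * Q))
          + 2 ^ Fintype.card ι * exp (-b ^ 2 / (2 * Q)) := by
        gcongr
        · exact card_signFlip_sum_ge_le a b hQ hb
        · simpa only [hQneg] using card_signFlip_sum_ge_le (-a) b (hQneg ▸ hQ) hb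
    _ = 2 ^ Fintype.card ι * (2 * exp (-s / 2)) := by rw [hexp]; ring

lemma measure_sq_sum_ge_le {Ω : Type*} [MeasurableSpace Ω] {μ : Measure Ω}
    [IsProbabilityMeasure μ] {Z : ι → Ω → ℝ} (hmeas : ∀ i, Measurable (Z i))
    (hindep : iIndepFun Z μ) (hsym : ∀ i, μ.map (Z i) = μ.map (fun ω => -Z i ω))
    {s : ℝ} (hs : 0 ≤ s) :
    μ {ω | 0 < ∑ i, Z i ω ^ 2 ∧ s * ∑ i, Z i ω ^ 2 ≤ (∑ i, Z i ω) ^ 2}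
      ≤ ENNReal.ofReal (2 * exp (-s / 2)) := by
  set A : Set (ι → ℝ) := {x | 0 < ∑ i, x i ^ 2 ∧ s * ∑ i, x i ^ 2 ≤ (∑ i, x i) ^ 2}
  have hZ : Measurable fun ω i => Z i ω := measurable_pi_lambda _ hmeas
  have hQ : Measurable fun x : ι → ℝ => ∑ i, x i ^ 2 := by fun_prop
  have hA : MeasurableSet A :=
    (measurableSet_lt measurable_const hQ).inter (measurableSet_le (hQ.const_mul s) (by fun_prop))
  have hcount : ∀ x, (#{ε | signFlip ε x ∈ A} : ℝ≥0∞)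
      ≤ Fintype.card (ι → Bool) * ENNReal.ofReal (2 * exp (-s / 2)) := by
    intro x
    simp only [A, Set.mem_ofPred_eq, sq_signFlip]
    by_cases hQ : 0 < ∑ i, x i ^ 2
    · simp only [hQ, true_and, Fintype.card_fun, Fintype.card_bool, Nat.cast_pow,
        Nat.cast_ofNat]
      rw [← ENNReal.ofReal_natCast, ← ENNReal.ofReal_ofNat 2, ← ENNReal.ofReal_pow zero_le_two,
        ← ENNReal.ofReal_mul (by positivity)]
      exact ENNReal.ofReal_le_ofReal (card_signFlip_sq_sum_ge_le x hs hQ)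
    · simp [hQ]
  calc μ {ω | 0 < ∑ i, Z i ω ^ 2 ∧ s * ∑ i, Z i ω ^ 2 ≤ (∑ i, Z i ω) ^ 2}
      = (μ.map fun ω i => Z i ω) A := (Measure.map_apply hZ hA).symm
    _ ≤ ENNReal.ofReal (2 * exp (-s / 2)) * (μ.map fun ω i => Z i ω) Set.univ :=
        measure_le_of_card_mem_le measurable_signFlip
          (map_signFlip_map_eq hmeas hindep hsym) hA hcount
    _ = ENNReal.ofReal (2 * exp (-s / 2)) := by
        rw [Measure.map_apply hZ MeasurableSet.univ, Set.preimage_univ, measure_univ, mul_one]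

end

end

theorem stmt_4_general {Ω : Type*} [MeasurableSpace Ω] (μ : Measure Ω) [IsProbabilityMeasure μ]
    (n : ℕ) (hn : 2 ≤ n) (Z : Fin n → Ω → ℝ)
    (hmeas : ∀ i, Measurable (Z i))
    (hindep : iIndepFun Z μ)
    (hsym : ∀ i, Measure.map (Z i) μ = Measure.map (fun ω => -(Z i ω)) μ)
    (μhat : Ω → ℝ) (hμ : ∀ ω, μhat ω = (1 / (n : ℝ)) * ∑ i, Z i ω)
    (σhatsq : Ω → ℝ)
    (hσ : ∀ ω, σhatsq ω = (1 / ((n : ℝ) - 1)) * ∑ i, (Z i ω - μhat ω) ^ 2)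
    (T : Ω → ℝ) (hT : ∀ ω, T ω = μhat ω / (Real.sqrt (σhatsq ω) / Real.sqrt n))
    (t : ℝ) :
    (μ {ω | 0 < σhatsq ω ∧ t ^ 2 ≤ (T ω) ^ 2}).toReal
      ≤ 2 * Real.exp (-(1 / 2) * t ^ 2 / (1 + t ^ 2 / ((n : ℝ) - 1))) := by
  set s := t ^ 2 / (1 + t ^ 2 / ((n : ℝ) - 1))
  have hs : 0 ≤ s := by
    have : (0 : ℝ) ≤ n - 1 := by
      have : (2 : ℝ) ≤ n := by exact_mod_cast hn
      linarith
    positivity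
  have hincl : {ω | 0 < σhatsq ω ∧ t ^ 2 ≤ (T ω) ^ 2}
      ⊆ {ω | 0 < ∑ i, Z i ω ^ 2 ∧ s * ∑ i, Z i ω ^ 2 ≤ (∑ i, Z i ω) ^ 2} := by
    rintro ω ⟨hσ0, hTt⟩
    have key := sq_sum_ge_of_sq_le_studentT (fun i => Z i ω) (m := μhat ω) (v := σhatsq ω)
      (t := t)
    simp only [Fintype.card_fin] at key
    exact key hn (hμ ω) (hσ ω) hσ0 (hT ω ▸ hTt)
  calc (μ {ω | 0 < σhatsq ω ∧ t ^ 2 ≤ (T ω) ^ 2}).toReal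
      ≤ (ENNReal.ofReal (2 * exp (-s / 2))).toReal :=
        ENNReal.toReal_mono ENNReal.ofReal_ne_top
          ((measure_mono hincl).trans (measure_sq_sum_ge_le hmeas hindep hsym hs))
    _ = 2 * exp (-(1 / 2) * t ^ 2 / (1 + t ^ 2 / ((n : ℝ) - 1))) := by
        rw [ENNReal.toReal_ofReal (by positivity)]
        simp only [s]
        ring_nf

/-- tail bound for the Student T-statistic of independent symmetric
mean-zero random variables. -/
theorem stmt_4 {Ω : Type*} [MeasurableSpace Ω] (μ : Measure Ω) [IsProbabilityMeasure μ]
    (n : ℕ) (hn : 2 ≤ n) (Z : Fin n → Ω → ℝ)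
    (hmeas : ∀ i, Measurable (Z i))
    (hindep : iIndepFun Z μ)
    (hsym : ∀ i, Measure.map (Z i) μ = Measure.map (fun ω => -(Z i ω)) μ)
    (hint : ∀ i, Integrable (Z i) μ)
    (hmean : ∀ i, ∫ ω, Z i ω ∂μ = 0)
    (μhat : Ω → ℝ) (hμ : ∀ ω, μhat ω = (1 / (n : ℝ)) * ∑ i, Z i ω)
    (σhatsq : Ω → ℝ)
    (hσ : ∀ ω, σhatsq ω = (1 / ((n : ℝ) - 1)) * ∑ i, (Z i ω - μhat ω) ^ 2)
    (T : Ω → ℝ) (hT : ∀ ω, T ω = μhat ω / (Real.sqrt (σhatsq ω) / Real.sqrt n))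
    (t : ℝ) (ht : 0 < t) :
    (μ {ω | 0 < σhatsq ω ∧ t ^ 2 ≤ (T ω) ^ 2}).toReal
      ≤ 2 * Real.exp (-(1 / 2) * t ^ 2 / (1 + t ^ 2 / ((n : ℝ) - 1))) :=
  stmt_4_general μ n hn Z hmeas hindep hsym μhat hμ σhatsq hσ T hT t
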